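/- Let K ⊆ ℝ^n be a nonempty closed convex set and f : ℝ^n → ℝ a polynomial of degree d ≥ 1 that is convex on K, and suppose OP(K,f) is non-regular (i.e., Sol(K∞, f_d) is unbounded). Then Sol(K,f) is nonempty and compact if and only if for every v ∈ Sol(K∞, f_d) \ {0} there exists x ∈ K with ⟨∇f(x), v⟩ > 0. -/

import Mathlib

open Filter Topology MvPolynomial Bornology
open scoped RealInnerProductSpace Pointwise

noncomputable section

/-- `ℝ^n` as Euclidean space. -/
abbrev En (n : ℕ) := EuclideanSpace ℝ (Fin n)

/-- Evaluation of a multivariate polynomial at a point of `ℝ^n`. -/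
def evalP {n : ℕ} (f : MvPolynomial (Fin n) ℝ) (x : En n) : ℝ :=
  MvPolynomial.eval (fun i => x i) f

/-- `Sol(C,g)`: the set of global minimizers of `g` on `C`. -/
def solSet {n : ℕ} (C : Set (En n)) (g : En n → ℝ) : Set (En n) :=
  {x ∈ C | ∀ y ∈ C, g x ≤ g y}

/-- `K∞`: the asymptotic cone of `K`. -/
def asympCone {n : ℕ} (K : Set (En n)) : Set (En n) :=
  {v | ∃ (t : ℕ → ℝ) (x : ℕ → En n), (∀ k, x k ∈ K) ∧
    Tendsto t atTop atTop ∧ Tendsto (fun k => (t k)⁻¹ • x k) atTop (𝓝 v)}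

/-- The gradient `∇f` of a polynomial, via its partial derivatives. -/
def polyGrad {n : ℕ} (f : MvPolynomial (Fin n) ℝ) (x : En n) : En n :=
  WithLp.toLp 2 (fun i => MvPolynomial.eval (fun j => x j) (MvPolynomial.pderiv i f))

/-- The `ℓ2`-norm of the coefficient vector of a polynomial. -/
def l2Norm {n : ℕ} (p : MvPolynomial (Fin n) ℝ) : ℝ :=
  Real.sqrt (∑ m ∈ p.support, (MvPolynomial.coeff m p) ^ 2)

/-- `S` is generic (residual) in `X`: it contains a countable intersection of sets, each of
which is open and dense in `X` (with respect to the `ℓ2` coefficient metric). -/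
def IsGenericIn {n : ℕ} (X S : Set (MvPolynomial (Fin n) ℝ)) : Prop :=
  ∃ D : ℕ → Set (MvPolynomial (Fin n) ℝ),
    (∀ k, D k ⊆ X ∧
      (∀ g ∈ D k, ∃ ε > 0, ∀ g' ∈ X, l2Norm (g' - g) < ε → g' ∈ D k) ∧
      (∀ g ∈ X, ∀ ε > 0, ∃ g' ∈ D k, l2Norm (g' - g) < ε)) ∧
    X ∩ (⋂ k, D k) ⊆ S

/-!
Because `Sol(K∞, f_d)` is nonempty and `f_d` is homogeneous of positive degree on the cone `K∞`,
`f_d ≥ 0` on `K∞`, so `Sol(K∞, f_d)` is the zero set of `f_d` in `K∞`.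

If `x*` minimizes `f` on `K` and `⟨∇f(x), v⟩ ≤ 0` for all `x ∈ K`, the gradient inequality of the
convex function `f` keeps the whole ray `x* + ℝ₊ v ⊆ K` inside `Sol(K, f)`, which is then unbounded.

Conversely, an unbounded sublevel set `{x ∈ K | f x ≤ c}` has a nonzero recession direction `v`.
Dividing `f ≤ c` by `‖x‖^d` gives `f_d(v) ≤ 0`, so `v ∈ Sol(K∞, f_d)`; dividing the gradient
inequality `⟨∇f(x), y - x⟩ ≤ c - f(x)` by `‖y‖` gives `⟨∇f(x), v⟩ ≤ 0` for every `x ∈ K`.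
So under the condition the sublevel sets are compact, and `f` attains its minimum on a compact set.
-/

lemma ConvexOn.le_sub_of_hasDerivAt_lineMap {E : Type*} [AddCommGroup E] [Module ℝ E]
    {K : Set E} {φ : E → ℝ} (hφ : ConvexOn ℝ K φ) {x y : E} (hx : x ∈ K) (hy : y ∈ K) {D : ℝ}
    (hD : HasDerivAt (fun s : ℝ => φ (AffineMap.lineMap x y s)) D 0) : D ≤ φ y - φ x := by
  have hconv := hφ.comp_affineMap (AffineMap.lineMap x y)
  have h := hconv.le_slope_of_hasDerivAt (x := 0) (y := 1) (by simpa using hx) (by simpa using hy)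
    zero_lt_one hD
  simpa [slope_def_field] using h

lemma not_isBounded_of_forall_add_smul_mem {E : Type*} [NormedAddCommGroup E] [NormedSpace ℝ E]
    {S : Set E} {x v : E} (hv : v ≠ 0) (hray : ∀ t : ℝ, 0 ≤ t → x + t • v ∈ S) :
    ¬ IsBounded S := by
  intro hS
  obtain ⟨R, hR⟩ := isBounded_iff_forall_norm_le.mp hS
  have hvpos : 0 < ‖v‖ := norm_pos_iff.mpr hv
  set t := (R + ‖x‖ + 1) / ‖v‖
  have ht : 0 ≤ t := div_nonneg (by linarith [norm_nonneg x, hR x (by simpa using hray 0 le_rfl)])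
    hvpos.le
  have htv : ‖t • v‖ = R + ‖x‖ + 1 := by
    rw [norm_smul, Real.norm_of_nonneg ht, div_mul_cancel₀ _ hvpos.ne']
  have := norm_sub_le_of_le (hR _ (hray t ht)) (le_refl ‖x‖)
  rw [add_sub_cancel_left, htv] at this
  linarith

section Polynomial

variable {n : ℕ}

lemma continuous_evalP (f : MvPolynomial (Fin n) ℝ) : Continuous (evalP f) :=
  (continuous_eval f).comp (PiLp.continuous_ofLp 2 _)

lemma evalP_smul_of_isHomogeneous {e : ℕ} {p : MvPolynomial (Fin n) ℝ} (hp : p.IsHomogeneous e)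
    (r : ℝ) (x : En n) : evalP p (r • x) = r ^ e * evalP p x := by
  simp only [evalP, eval_eq', PiLp.smul_apply, smul_eq_mul, Finset.mul_sum]
  refine Finset.sum_congr rfl fun m hm => ?_
  have hdeg : ∑ i, m i = e := by
    rw [← Finsupp.degree_eq_sum, Finsupp.degree_eq_weight_one]
    exact hp (mem_support_iff.mp hm)
  simp only [mul_pow, Finset.prod_mul_distrib, Finset.prod_pow_eq_pow_sum, hdeg]
  ring

lemma evalP_eq_sum_homogeneousComponent {d : ℕ} {f : MvPolynomial (Fin n) ℝ}
    (hdeg : f.totalDegree ≤ d) (x : En n) :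
    evalP f x = ∑ e ∈ Finset.range (d + 1), evalP (homogeneousComponent e f) x := by
  conv_lhs => rw [← sum_homogeneousComponent f]
  rw [← Finset.sum_subset (Finset.range_subset_range.mpr (by omega : f.totalDegree + 1 ≤ d + 1))
    fun e _ he => ?_]
  · simp only [evalP, map_sum]
  · rw [homogeneousComponent_eq_zero e f (by simpa using he)]
    simp [evalP]

lemma inv_pow_mul_evalP_smul {d : ℕ} {f : MvPolynomial (Fin n) ℝ} (hdeg : f.totalDegree ≤ d)
    {t : ℝ} (ht : t ≠ 0) (u : En n) :
    t⁻¹ ^ d * evalP f (t • u) =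
      ∑ e ∈ Finset.range (d + 1), t⁻¹ ^ (d - e) * evalP (homogeneousComponent e f) u := by
  rw [evalP_eq_sum_homogeneousComponent hdeg, Finset.mul_sum]
  refine Finset.sum_congr rfl fun e he => ?_
  rw [evalP_smul_of_isHomogeneous (homogeneousComponent_isHomogeneous e f),
    pow_sub₀ _ (inv_ne_zero ht) (Finset.mem_range_succ_iff.mp he), inv_pow t e, inv_inv]
  field_simp

lemma tendsto_inv_pow_mul_evalP_smul {d : ℕ} {f : MvPolynomial (Fin n) ℝ}
    (hdeg : f.totalDegree ≤ d) {ι : Type*} {l : Filter ι} {t : ι → ℝ} {u : ι → En n} {v : En n}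
    (ht : Tendsto t l atTop) (hu : Tendsto u l (𝓝 v)) :
    Tendsto (fun k => (t k)⁻¹ ^ d * evalP f (t k • u k)) l
      (𝓝 (evalP (homogeneousComponent d f) v)) := by
  set G : ℝ × En n → ℝ := fun p =>
    ∑ e ∈ Finset.range (d + 1), p.1 ^ (d - e) * evalP (homogeneousComponent e f) p.2
  have hG : Continuous G := continuous_finsetSum _ fun e _ =>
    (continuous_fst.pow _).mul ((continuous_evalP _).comp continuous_snd)
  have hG0 : G (0, v) = evalP (homogeneousComponent d f) v := by
    simp only [G]
    rw [Finset.sum_eq_single_of_mem d (Finset.self_mem_range_succ d) fun e he hed => ?_]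
    · simp
    · rw [zero_pow (by have := Finset.mem_range_succ_iff.mp he; omega), zero_mul]
  have hlim : Tendsto (fun k => G ((t k)⁻¹, u k)) l (𝓝 (evalP (homogeneousComponent d f) v)) :=
    hG0 ▸ (hG.tendsto _).comp ((tendsto_inv_atTop_zero.comp ht).prodMk_nhds hu)
  refine hlim.congr' ?_
  filter_upwards [ht.eventually_ne_atTop 0] with k hk
  exact (inv_pow_mul_evalP_smul hdeg hk (u k)).symm

lemma hasDerivAt_evalP_add_smul (f : MvPolynomial (Fin n) ℝ) (x w : En n) :
    HasDerivAt (fun s : ℝ => evalP f (x + s • w))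
      (∑ i, eval (fun j => x j) (pderiv i f) * w i) 0 := by
  induction f using MvPolynomial.induction_on with
  | C a => simpa [evalP] using hasDerivAt_const (0 : ℝ) a
  | add p q hp hq =>
    have hfun : (fun s : ℝ => evalP (p + q) (x + s • w)) =
        fun s => evalP p (x + s • w) + evalP q (x + s • w) := by
      funext s; simp [evalP]
    rw [hfun]
    exact (hp.add hq).congr_deriv (by simp [Finset.sum_add_distrib, add_mul])
  | mul_X p i hp =>
    have hfun : (fun s : ℝ => evalP (p * X i) (x + s • w)) =
        fun s => evalP p (x + s • w) * (x i + s * w i) := by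
      funext s; simp [evalP]
    have hcoord : HasDerivAt (fun s : ℝ => x i + s * w i) (w i) 0 := by
      simpa using ((hasDerivAt_id (0 : ℝ)).mul_const (w i)).const_add (x i)
    rw [hfun]
    refine (hp.mul hcoord).congr_deriv ?_
    simp [evalP, pderiv_X, Pi.single_apply, apply_ite, ite_mul, add_mul, Finset.sum_add_distrib,
      Finset.sum_mul, add_comm]
    exact Finset.sum_congr rfl fun j _ => by ring

lemma inner_polyGrad_sub_le {f : MvPolynomial (Fin n) ℝ} {K : Set (En n)}
    (hf : ConvexOn ℝ K (evalP f)) {x y : En n} (hx : x ∈ K) (hy : y ∈ K) :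
    ⟪polyGrad f x, y - x⟫ ≤ evalP f y - evalP f x := by
  refine hf.le_sub_of_hasDerivAt_lineMap hx hy ?_
  have h := hasDerivAt_evalP_add_smul f x (y - x)
  simp only [AffineMap.lineMap_apply_module', add_comm _ x]
  convert h using 1
  simp [polyGrad, PiLp.inner_apply, mul_comm]

end Polynomial

section AsympCone

variable {n : ℕ} {K S : Set (En n)}

lemma zero_mem_asympCone (hK : K.Nonempty) : (0 : En n) ∈ asympCone K := by
  obtain ⟨x, hx⟩ := hK
  refine ⟨fun k : ℕ => (k : ℝ), fun _ => x, fun _ => hx, tendsto_natCast_atTop_atTop, ?_⟩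
  simpa using (tendsto_inv_atTop_zero.comp (tendsto_natCast_atTop_atTop (R := ℝ))).smul_const x

lemma smul_mem_asympCone {v : En n} (hv : v ∈ asympCone K) {c : ℝ} (hc : 0 < c) :
    c • v ∈ asympCone K := by
  obtain ⟨t, x, hxK, ht, hlim⟩ := hv
  refine ⟨fun k => c⁻¹ * t k, x, hxK, ht.const_mul_atTop (inv_pos.mpr hc), ?_⟩
  simpa only [mul_inv, inv_inv, mul_smul] using hlim.const_smul c

lemma asympCone_mono (h : S ⊆ K) : asympCone S ⊆ asympCone K :=
  fun _ ⟨t, x, hxS, ht, hlim⟩ => ⟨t, x, fun k => h (hxS k), ht, hlim⟩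

lemma add_smul_mem_of_mem_asympCone (hKcl : IsClosed K) (hKcv : Convex ℝ K) {x v : En n}
    (hx : x ∈ K) (hv : v ∈ asympCone K) {s : ℝ} (hs : 0 ≤ s) : x + s • v ∈ K := by
  obtain ⟨t, y, hyK, ht, hlim⟩ := hv
  -- `x + s • v` is the limit of the points `x + (s / t k) • (y k - x)` of the segments `[x, y k]`.
  have hseg : ∀ᶠ k in atTop, x + (s * (t k)⁻¹) • (y k - x) ∈ K := by
    filter_upwards [ht.eventually_ge_atTop s, ht.eventually_gt_atTop 0] with k hst htpos
    have hθ : s * (t k)⁻¹ ≤ 1 := by rwa [← div_eq_mul_inv, div_le_one htpos]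
    rw [add_comm, ← AffineMap.lineMap_apply_module']
    exact hKcv.lineMap_mem hx (hyK k) ⟨by positivity, hθ⟩
  have hlim' : Tendsto (fun k => x + (s * (t k)⁻¹) • (y k - x)) atTop (𝓝 (x + s • v)) := by
    have hinv := tendsto_inv_atTop_zero.comp ht
    have := tendsto_const_nhds (x := x) |>.add
      ((hlim.const_smul s).sub ((hinv.const_mul s).smul_const x))
    simpa [smul_sub, mul_smul] using this
  exact hKcl.mem_of_tendsto hlim' hseg

lemma exists_ne_zero_mem_asympCone_of_not_isBounded (hS : ¬ IsBounded S) :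
    ∃ v ∈ asympCone S, v ≠ 0 := by
  have hfar : ∀ k : ℕ, ∃ y ∈ S, (k : ℝ) + 1 ≤ ‖y‖ := by
    simp only [isBounded_iff_forall_norm_le, not_exists, not_forall, not_le] at hS
    exact fun k => (hS ((k : ℝ) + 1)).imp fun y ⟨hyS, hy⟩ => ⟨hyS, hy.le⟩
  choose y hyS hy using hfar
  have hypos : ∀ k, 0 < ‖y k‖ := fun k => lt_of_lt_of_le (by positivity) (hy k)
  have hsphere : ∀ k, ‖y k‖⁻¹ • y k ∈ Metric.sphere (0 : En n) 1 := fun k => by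
    simp [norm_smul, (hypos k).ne']
  obtain ⟨v, hv, φ, hφ, hlim⟩ := (isCompact_sphere (0 : En n) 1).tendsto_subseq hsphere
  have hnorm : Tendsto (fun k => ‖y (φ k)‖) atTop atTop :=
    tendsto_atTop_mono (fun k => (by exact_mod_cast hφ.le_apply : (k : ℝ) ≤ φ k).trans
      ((le_add_of_nonneg_right zero_le_one).trans (hy (φ k)))) tendsto_natCast_atTop_atTop
  exact ⟨v, ⟨_, _, fun k => hyS (φ k), hnorm, hlim⟩, ne_zero_of_mem_unit_sphere ⟨v, hv⟩⟩

lemma inner_nonpos_of_mem_asympCone {g : En n} {M : ℝ} (hS : ∀ y ∈ S, ⟪g, y⟫ ≤ M) {v : En n}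
    (hv : v ∈ asympCone S) : ⟪g, v⟫ ≤ 0 := by
  obtain ⟨t, x, hxS, ht, hlim⟩ := hv
  have hinv := tendsto_inv_atTop_zero.comp ht
  refine le_of_tendsto_of_tendsto ((continuous_const.inner continuous_id).tendsto v |>.comp hlim)
    (by simpa using hinv.mul_const M) ?_
  filter_upwards [ht.eventually_gt_atTop 0] with k hk
  simpa [real_inner_smul_right] using
    mul_le_mul_of_nonneg_left (hS _ (hxS k)) (inv_nonneg.mpr hk.le)

lemma evalP_homogeneousComponent_nonpos_of_mem_asympCone {d : ℕ} {f : MvPolynomial (Fin n) ℝ}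
    (hdeg : f.totalDegree ≤ d) (hd : 1 ≤ d) {c : ℝ} (hS : ∀ y ∈ S, evalP f y ≤ c) {v : En n}
    (hv : v ∈ asympCone S) : evalP (homogeneousComponent d f) v ≤ 0 := by
  obtain ⟨t, x, hxS, ht, hlim⟩ := hv
  have hc : Tendsto (fun k => (t k)⁻¹ ^ d * c) atTop (𝓝 0) := by
    simpa [zero_pow (by omega : d ≠ 0)] using ((tendsto_inv_atTop_zero.comp ht).pow d).mul_const c
  refine le_of_tendsto_of_tendsto (tendsto_inv_pow_mul_evalP_smul hdeg ht hlim) hc ?_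
  filter_upwards [ht.eventually_gt_atTop 0] with k hk
  rw [smul_inv_smul₀ hk.ne']
  exact mul_le_mul_of_nonneg_left (hS _ (hxS k)) (pow_nonneg (inv_nonneg.mpr hk.le) d)

end AsympCone

lemma exists_pos_inner_polyGrad_of_isBounded_solSet {n : ℕ} {K : Set (En n)} (hKcl : IsClosed K)
    (hKcv : Convex ℝ K) {f : MvPolynomial (Fin n) ℝ} (hf : ConvexOn ℝ K (evalP f)) {xs : En n}
    (hxs : xs ∈ solSet K (evalP f)) (hbdd : IsBounded (solSet K (evalP f))) {v : En n}
    (hv : v ∈ asympCone K) (hv0 : v ≠ 0) : ∃ x ∈ K, 0 < ⟪polyGrad f x, v⟫ := by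
  by_contra! hnonpos
  refine not_isBounded_of_forall_add_smul_mem (x := xs) hv0 (fun t ht => ?_) hbdd
  have hy : xs + t • v ∈ K := add_smul_mem_of_mem_asympCone hKcl hKcv hxs.1 hv ht
  have hgrad := inner_polyGrad_sub_le hf hy hxs.1
  have hinner : ⟪polyGrad f (xs + t • v), xs - (xs + t • v)⟫ =
      -(t * ⟪polyGrad f (xs + t • v), v⟫) := by
    rw [sub_add_cancel_left, inner_neg_right, real_inner_smul_right]
  have hle : evalP f (xs + t • v) ≤ evalP f xs := by
    nlinarith [hnonpos _ hy]
  exact ⟨hy, fun y hyK => hle.trans (hxs.2 y hyK)⟩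

lemma evalP_nonneg_of_solSet_nonempty {n d : ℕ} {p : MvPolynomial (Fin n) ℝ}
    (hp : p.IsHomogeneous d) (hd : 1 ≤ d) {C : Set (En n)} (h0 : 0 ∈ C)
    (hsmul : ∀ x ∈ C, ∀ t : ℝ, 0 < t → t • x ∈ C) (hne : (solSet C (evalP p)).Nonempty)
    {w : En n} (hw : w ∈ C) : 0 ≤ evalP p w := by
  obtain ⟨v, hvC, hvmin⟩ := hne
  have hp0 : evalP p 0 = 0 := by
    simpa [zero_pow (by omega : d ≠ 0)] using evalP_smul_of_isHomogeneous hp 0 (0 : En n)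
  have hle : evalP p v ≤ 0 := hp0 ▸ hvmin 0 h0
  have hge : evalP p v ≤ 2 ^ d * evalP p v :=
    evalP_smul_of_isHomogeneous hp 2 v ▸ hvmin _ (hsmul v hvC 2 two_pos)
  have h2d : (2 : ℝ) ≤ 2 ^ d := le_self_pow₀ one_le_two (by omega)
  have hv : evalP p v = 0 := by nlinarith
  exact hv ▸ hvmin w hw

lemma solSet_nonempty_isCompact_of_isBounded {n : ℕ} {K : Set (En n)} (hKcl : IsClosed K)
    {g : En n → ℝ} (hg : Continuous g) {x₀ : En n} (hx₀ : x₀ ∈ K)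
    (hbdd : IsBounded {x ∈ K | g x ≤ g x₀}) :
    (solSet K g).Nonempty ∧ IsCompact (solSet K g) := by
  have hL : IsCompact {x ∈ K | g x ≤ g x₀} :=
    Metric.isCompact_of_isClosed_isBounded (hKcl.inter (isClosed_le hg continuous_const)) hbdd
  obtain ⟨xs, hxs, hmin⟩ := hL.exists_isMinOn ⟨x₀, hx₀, le_rfl⟩ hg.continuousOn
  have hsol : solSet K g = {x ∈ K | g x ≤ g xs} := by
    ext y
    refine ⟨fun hy => ⟨hy.1, hy.2 xs hxs.1⟩, fun hy => ⟨hy.1, fun z hz => ?_⟩⟩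
    rcases le_total (g z) (g x₀) with hz' | hz'
    · exact hy.2.trans (hmin ⟨hz, hz'⟩)
    · exact hy.2.trans ((hmin ⟨hx₀, le_rfl⟩).trans hz')
  refine ⟨⟨xs, hsol ▸ ⟨hxs.1, le_rfl⟩⟩, hL.of_isClosed_subset ?_ ?_⟩
  · exact hsol ▸ hKcl.inter (isClosed_le hg continuous_const)
  · exact hsol ▸ fun y hy => ⟨hy.1, hy.2.trans hxs.2⟩

/-- For `K` nonempty closed convex, `f` a polynomial of degree `d ≥ 1` convex on `K`, and
`OP(K,f)` non-regular: `Sol(K,f)` is nonempty and compact iff for every nonzero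
`v ∈ Sol(K∞, f_d)` there exists `x ∈ K` with `⟨∇f(x), v⟩ > 0`. -/
theorem stmt7 {n d : ℕ} (hd : 1 ≤ d) (K : Set (En n)) (hKne : K.Nonempty) (hKcl : IsClosed K)
    (hKcv : Convex ℝ K) (f : MvPolynomial (Fin n) ℝ) (hdeg : f.totalDegree = d)
    (hcvx : ConvexOn ℝ K (evalP f))
    (hnonreg : ¬ IsBounded (solSet (asympCone K) (evalP (homogeneousComponent d f)))) :
    ((solSet K (evalP f)).Nonempty ∧ IsCompact (solSet K (evalP f))) ↔
    (∀ v ∈ solSet (asympCone K) (evalP (homogeneousComponent d f)), v ≠ 0 →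
      ∃ x ∈ K, 0 < ⟪polyGrad f x, v⟫) := by
  have hfd_nonneg : ∀ w ∈ asympCone K, 0 ≤ evalP (homogeneousComponent d f) w :=
    fun w hw => evalP_nonneg_of_solSet_nonempty (homogeneousComponent_isHomogeneous d f) hd
      (zero_mem_asympCone hKne) (fun x hx t ht => smul_mem_asympCone hx ht)
      (nonempty_of_not_isBounded hnonreg) hw
  refine ⟨fun ⟨⟨xs, hxs⟩, hcpt⟩ v hv hv0 =>
    exists_pos_inner_polyGrad_of_isBounded_solSet hKcl hKcv hcvx hxs hcpt.isBounded hv.1 hv0,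
    fun hdir => ?_⟩
  obtain ⟨x₀, hx₀⟩ := hKne
  refine solSet_nonempty_isCompact_of_isBounded hKcl (continuous_evalP f) hx₀ ?_
  by_contra hunbdd
  obtain ⟨v, hvL, hv0⟩ := exists_ne_zero_mem_asympCone_of_not_isBounded hunbdd
  have hvK : v ∈ asympCone K := asympCone_mono (Set.sep_subset _ _) hvL
  have hfd_nonpos :=
    evalP_homogeneousComponent_nonpos_of_mem_asympCone hdeg.le hd (fun y hy => hy.2) hvL
  obtain ⟨x, hx, hpos⟩ := hdir v ⟨hvK, fun w hw => hfd_nonpos.trans (hfd_nonneg w hw)⟩ hv0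
  refine hpos.not_ge (inner_nonpos_of_mem_asympCone (M := evalP f x₀ - evalP f x +
    ⟪polyGrad f x, x⟫) (fun y hy => ?_) hvL)
  have := inner_polyGrad_sub_le hcvx hx hy.1
  rw [inner_sub_right] at this
  linarith [hy.2]

end
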